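/- arXiv:2001.09120 — 3 statements merged into one kernel-verified Lean document; each statement's English description precedes it below -/
import Mathlib

section
/- If P is a G-invariant G-graded module over a crossed product A (with units u_g ∈ A_g and u'_g ∈ A'_g where A' = End_A(P)^op), then the homomorphism θ: C_A(B) → C_{A'}(B'), θ(c)(a ⊗ u) = ac ⊗ u, is G-equivariant: θ(u_g c u_g^{-1}) = u'_g θ(c) u'^{-1}_g (product in A' = End_A(P)^op) for all g ∈ G and c ∈ C_A(B). -/
/-- `f` represents `θ(c)` on `P = A ⊗_B U`: under the identification `U = P_1`
(valid since `A` is a crossed product, hence strongly graded), the endomorphism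
`θ(c) : a ⊗ u ↦ ac ⊗ u` is the unique `A`-linear endomorphism of `P` sending
`u = 1 ⊗ u ∈ P_1` to `c • u = c ⊗ u`. -/
def IsTheta {G A P : Type*} [Group G] [Ring A] [AddCommGroup P] [Module A P]
    (𝔓 : G → AddSubgroup P) (c : A) (f : P →ₗ[A] P) : Prop :=
  ∀ u ∈ 𝔓 (1 : G), f u = c • u

/-! On a homogeneous `p ∈ P_x`, `θ(c)` acts not as `c` but as a conjugate of it: with
`v = u_{x⁻¹}` one has `v • p ∈ P_1`, so `θ(c) p = θ(c) (v⁻¹ • v • p) = (v⁻¹ c v) • p`.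
Since `P_1` generates `P` over `A`, both sides of the claim are determined by their values on `P_1`,
where the left side acts as `u_g c u_g⁻¹` and the right side as `u_{g⁻¹}⁻¹ c u_{g⁻¹}`.
These agree because `c` commutes with `u_{g⁻¹} u_g ∈ A_1`. -/

theorem Units.mul_mul_inv_eq_inv_mul_mul_of_commute {M : Type*} [Monoid M] (u v : Mˣ) {c : M}
    (h : Commute c (v * u : M)) : (u : M) * c * ↑u⁻¹ = ↑v⁻¹ * c * v := by
  calc (u : M) * c * ↑u⁻¹ = ↑v⁻¹ * ((v * u) * c) * ↑u⁻¹ := by simp [mul_assoc]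
    _ = ↑v⁻¹ * (c * (v * u)) * ↑u⁻¹ := by rw [h.eq]
    _ = ↑v⁻¹ * c * v := by simp [mul_assoc]

theorem Submodule.span_eq_top_of_isInternal_of_units_smul_mem {ι A P : Type*} [DecidableEq ι]
    [Ring A] [AddCommGroup P] [Module A P] {𝔓 : ι → AddSubgroup P} (hP : DirectSum.IsInternal 𝔓)
    (S : Set P) (hS : ∀ i, ∀ p ∈ 𝔓 i, ∃ v : Aˣ, v • p ∈ S) : Submodule.span A S = ⊤ := by
  refine Submodule.eq_top_iff'.2 fun p => ?_
  obtain ⟨d, rfl⟩ := hP.2 p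
  induction d using DirectSum.induction_on with
  | zero => simp
  | of i p =>
    obtain ⟨v, hv⟩ := hS i p p.2
    rw [DirectSum.coeAddMonoidHom_of, ← inv_smul_smul v (p : P)]
    exact Submodule.smul_of_tower_mem _ _ (Submodule.subset_span hv)
  | add d e hd he => simpa only [map_add] using add_mem hd he

theorem IsTheta.apply_eq_conj_smul {G A P : Type*} [Group G] [Ring A] [AddCommGroup P] [Module A P]
    {𝔓 : G → AddSubgroup P} {c : A} {f : P →ₗ[A] P} (hf : IsTheta 𝔓 c f) (v : Aˣ) {p : P}
    (hp : (v : A) • p ∈ 𝔓 1) : f p = (↑v⁻¹ * c * v) • p := by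
  conv_lhs => rw [← inv_smul_smul v p]
  simp only [Units.smul_def, map_smul, hf _ hp, mul_smul]

theorem stmt12_general {G A P : Type*} [Group G] [DecidableEq G]
    [Ring A] [AddCommGroup P] [Module A P]
    (𝒜 : G → AddSubgroup A) (𝔓 : G → AddSubgroup P)
    (hmul : ∀ {g h : G} {a b : A}, a ∈ 𝒜 g → b ∈ 𝒜 h → a * b ∈ 𝒜 (g * h))
    -- `A` is a crossed product with chosen homogeneous units `u_g`
    (u : G → Aˣ) (hu : ∀ g : G, (u g : A) ∈ 𝒜 g)
    -- `P` is a `G`-graded `A`-module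
    (hP : DirectSum.IsInternal 𝔓)
    (hPs : ∀ {g x : G} {a : A} {p : P}, a ∈ 𝒜 g → p ∈ 𝔓 x → a • p ∈ 𝔓 (g * x))
    -- chosen homogeneous units `u'_g ∈ A'_g` (so `P` is `G`-invariant)
    (u' : G → (P ≃ₗ[A] P))
    (hu' : ∀ g : G, ∀ x : G, ∀ p ∈ 𝔓 x, u' g p ∈ 𝔓 (x * g))
    (g : G) (c : A) (hc : c ∈ Set.centralizer ((𝒜 1 : AddSubgroup A) : Set A))
    (f h : P →ₗ[A] P)
    (hf : IsTheta 𝔓 c f)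
    (hh : IsTheta 𝔓 ((u g : A) * c * ((u g)⁻¹ : Aˣ)) h) :
    h = ((u' g).symm.toLinearMap.comp (f.comp (u' g).toLinearMap)) := by
  have hdeg : ∀ x, ∀ p ∈ 𝔓 x, (u x⁻¹ : A) • p ∈ 𝔓 1 := fun x p hp => by
    simpa using hPs (hu x⁻¹) hp
  have hspan : Submodule.span A (𝔓 1 : Set P) = ⊤ :=
    Submodule.span_eq_top_of_isInternal_of_units_smul_mem hP _ fun x p hp => ⟨_, hdeg x p hp⟩
  have hmem : (u g⁻¹ * u g : A) ∈ 𝒜 1 := by simpa using hmul (hu g⁻¹) (hu g)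
  have hconj : (u g : A) * c * ↑(u g)⁻¹ = ↑(u g⁻¹)⁻¹ * c * u g⁻¹ :=
    Units.mul_mul_inv_eq_inv_mul_mul_of_commute _ _ (hc _ hmem).symm
  refine LinearMap.ext_on hspan fun p hp => ?_
  have hgp : u' g p ∈ 𝔓 g := by simpa using hu' g 1 p hp
  simp [hh p hp, hf.apply_eq_conj_smul _ (hdeg g _ hgp), hconj]

/-- Let `P = A ⊗_B U` be a `G`-invariant `G`-graded module over a
crossed product `A` (with homogeneous units `u_g ∈ A_g`, and homogeneous units
`u'_g ∈ A'_g` of `A' = End_A(P)^op`, i.e. `A`-linear automorphisms `u'_g` of `P`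
with `u'_g(P_x) ⊆ P_{xg}`).  Then `θ : C_A(B) → C_{A'}(B')`, `θ(c)(a⊗u) = ac⊗u`,
is `G`-equivariant: `θ(u_g c u_g⁻¹) = u'_g θ(c) u'⁻¹_g`, the product taken in
`A' = End_A(P)^op`, i.e. `θ(u_g c u_g⁻¹) = u'⁻¹_g ∘ θ(c) ∘ u'_g` as maps. -/
theorem stmt12 {G A P : Type*} [Group G] [Finite G] [DecidableEq G]
    [Ring A] [AddCommGroup P] [Module A P]
    (𝒜 : G → AddSubgroup A) (𝔓 : G → AddSubgroup P)
    (hone : (1 : A) ∈ 𝒜 1)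
    (hmul : ∀ {g h : G} {a b : A}, a ∈ 𝒜 g → b ∈ 𝒜 h → a * b ∈ 𝒜 (g * h))
    (hA : DirectSum.IsInternal 𝒜)
    -- `A` is a crossed product with chosen homogeneous units `u_g`
    (u : G → Aˣ) (hu : ∀ g : G, (u g : A) ∈ 𝒜 g)
    -- `P` is a `G`-graded `A`-module
    (hP : DirectSum.IsInternal 𝔓)
    (hPs : ∀ {g x : G} {a : A} {p : P}, a ∈ 𝒜 g → p ∈ 𝔓 x → a • p ∈ 𝔓 (g * x))
    -- chosen homogeneous units `u'_g ∈ A'_g` (so `P` is `G`-invariant)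
    (u' : G → (P ≃ₗ[A] P))
    (hu' : ∀ g : G, ∀ x : G, ∀ p ∈ 𝔓 x, u' g p ∈ 𝔓 (x * g))
    (g : G) (c : A) (hc : c ∈ Set.centralizer ((𝒜 1 : AddSubgroup A) : Set A))
    (f h : P →ₗ[A] P)
    (hf : IsTheta 𝔓 c f)
    (hh : IsTheta 𝔓 ((u g : A) * c * ((u g)⁻¹ : Aˣ)) h) :
    h = ((u' g).symm.toLinearMap.comp (f.comp (u' g).toLinearMap)) :=
  stmt12_general 𝒜 𝔓 hmul u hu hP hPs u' hu' g c hc f h hf hh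
end

section
/- Let A be a crossed product G-graded algebra over 𝒞 with structure map ζ: 𝒞 → C_A(B), B = A_1, and U a B-module. Then P = A ⊗_B U is a G-graded bimodule over 𝒞 in the sense that for all g ∈ G, p_g ∈ P_g = A_g ⊗_B U, and c ∈ 𝒞: p_g · ζ'(c) = ζ({}^g c) · p_g, where ζ' = θ ∘ ζ: 𝒞 → End_A(P)^op with θ(c)(a ⊗ u) = ac ⊗ u. -/
/-!
The inverse of the homogeneous unit `u_g` is homogeneous of degree `g⁻¹`: comparing
degree-one components in `u_g * u_g⁻¹ = 1` shows that `u_g` times the degree-`g⁻¹` component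
of `u_g⁻¹` is already `1`. Hence every `p ∈ P_g` is `u_g • q` with `q = u_g⁻¹ • p ∈ P_1`, and
`A`-linearity of `f` gives `f p = u_g • ζ(c) • q = (u_g ζ(c) u_g⁻¹) • p = ζ(ᵍc) • p`.
-/

open DirectSum

section GroupGraded

variable {ι A σ : Type*} [Group ι] [DecidableEq ι] [Semiring A] [SetLike σ A]
  [AddSubmonoidClass σ A] (𝒜 : ι → σ)

theorem coe_decompose_mul_of_left_mem_of_mul_mem [Decomposition 𝒜]
    (hmul : ∀ {g h : ι} {a b : A}, a ∈ 𝒜 g → b ∈ 𝒜 h → a * b ∈ 𝒜 (g * h))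
    {g : ι} {a : A} (ha : a ∈ 𝒜 g) (x : A) (h : ι) :
    (decompose 𝒜 (a * x) (g * h) : A) = a * decompose 𝒜 x h := by
  induction x using Decomposition.inductionOn 𝒜 with
  | zero => simp
  | @homogeneous k x =>
    by_cases hk : k = h
    · subst hk
      rw [decompose_of_mem_same 𝒜 (hmul ha x.2), decompose_of_mem_same 𝒜 x.2]
    · rw [decompose_of_mem_ne 𝒜 (hmul ha x.2) (by simpa using hk),
        decompose_of_mem_ne 𝒜 x.2 hk, mul_zero]
  | add x y hx hy => simp [mul_add, hx, hy]

theorem Units.val_inv_mem_of_val_mem (hA : IsInternal 𝒜) (hone : (1 : A) ∈ 𝒜 1)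
    (hmul : ∀ {g h : ι} {a b : A}, a ∈ 𝒜 g → b ∈ 𝒜 h → a * b ∈ 𝒜 (g * h))
    {g : ι} {v : Aˣ} (hv : (v : A) ∈ 𝒜 g) : ((v⁻¹ : Aˣ) : A) ∈ 𝒜 g⁻¹ := by
  let := hA.chooseDecomposition
  have hright_inv : (v : A) * decompose 𝒜 ((v⁻¹ : Aˣ) : A) g⁻¹ = 1 := by
    rw [← coe_decompose_mul_of_left_mem_of_mul_mem 𝒜 hmul hv, mul_inv_cancel, Units.mul_inv,
      decompose_of_mem_same 𝒜 hone]
  rw [Units.inv_eq_of_mul_eq_one_right hright_inv]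
  exact SetLike.coe_mem _

end GroupGraded

theorem stmt16_general {G C A P : Type*} [Group G] [DecidableEq G]
    [Ring C] [Ring A] [AddCommGroup P] [Module A P]
    (𝒜 : G → AddSubgroup A)
    (honeA : (1 : A) ∈ 𝒜 1)
    (hmulA : ∀ {g h : G} {a b : A}, a ∈ 𝒜 g → b ∈ 𝒜 h → a * b ∈ 𝒜 (g * h))
    (hA : DirectSum.IsInternal 𝒜)
    -- `A` is a crossed product
    (u : G → Aˣ) (hu : ∀ g : G, (u g : A) ∈ 𝒜 g)
    -- `𝒞` is a `G`-graded `G`-acted algebra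
    (σ : G → C → C)
    -- the structure map `ζ : 𝒞 → C_A(B)`, graded and `G`-equivariant
    (ζ : C →+* A)
    (hζσ : ∀ (g : G) (c : C), ζ (σ g c) = (u g : A) * ζ c * ((u g)⁻¹ : Aˣ))
    -- `P` is a `G`-graded `A`-module
    (𝔓 : G → AddSubgroup P)
    (hPs : ∀ {g x : G} {a : A} {p : P}, a ∈ 𝒜 g → p ∈ 𝔓 x → a • p ∈ 𝔓 (g * x))
    -- `f = ζ'(c) = θ(ζ(c))`
    (c : C) (f : P →ₗ[A] P)
    (hf : ∀ v ∈ 𝔓 (1 : G), f v = ζ c • v) :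
    ∀ g : G, ∀ p ∈ 𝔓 g, f p = ζ (σ g c) • p := by
  intro g p hp
  have hq : (((u g)⁻¹ : Aˣ) : A) • p ∈ 𝔓 1 := by
    simpa using hPs ((u g).val_inv_mem_of_val_mem 𝒜 hA honeA hmulA (hu g)) hp
  calc f p = f ((u g : A) • (((u g)⁻¹ : Aˣ) : A) • p) := by
        rw [smul_smul, Units.mul_inv, one_smul]
    _ = (u g : A) • ζ c • (((u g)⁻¹ : Aˣ) : A) • p := by rw [map_smul, hf _ hq]
    _ = ζ (σ g c) • p := by rw [hζσ, smul_smul, smul_smul, mul_assoc]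

/-- Let `𝒞` be a `G`-graded `G`-acted algebra, `A` a crossed
product `G`-graded algebra over `𝒞` with structure map `ζ : 𝒞 → C_A(B)`,
`B = A_1`, `U` a `B`-module, and `P = A ⊗_B U` (equivalently, a `G`-graded
`A`-module with `P_1 = U`, `A` being strongly graded).  Let
`ζ' = θ ∘ ζ : 𝒞 → End_A(P)^op`, where `θ(a)(x ⊗ u) = xa ⊗ u`; thus `ζ'(c)` is the
`A`-linear endomorphism `f` of `P` with `f(u) = ζ(c) • u` for `u ∈ P_1`.  Then `P`
is a `G`-graded bimodule over `𝒞`: for all `g ∈ G`, `p ∈ P_g` and `c ∈ 𝒞`,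
`p · ζ'(c) = ζ(ᵍc) · p`. -/
theorem stmt16 {G C A P : Type*} [Group G] [Finite G] [DecidableEq G]
    [Ring C] [Ring A] [AddCommGroup P] [Module A P]
    (ℭ : G → AddSubgroup C) (𝒜 : G → AddSubgroup A)
    (honeA : (1 : A) ∈ 𝒜 1)
    (hmulA : ∀ {g h : G} {a b : A}, a ∈ 𝒜 g → b ∈ 𝒜 h → a * b ∈ 𝒜 (g * h))
    (hA : DirectSum.IsInternal 𝒜)
    -- `A` is a crossed product
    (u : G → Aˣ) (hu : ∀ g : G, (u g : A) ∈ 𝒜 g)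
    -- `𝒞` is a `G`-graded `G`-acted algebra
    (σ : G → C → C)
    (hℭ : DirectSum.IsInternal ℭ)
    (hσ : ∀ {g h : G} {c : C}, c ∈ ℭ h → σ g c ∈ ℭ (g * h * g⁻¹))
    -- the structure map `ζ : 𝒞 → C_A(B)`, graded and `G`-equivariant
    (ζ : C →+* A)
    (hζC : ∀ c : C, ζ c ∈ Set.centralizer ((𝒜 1 : AddSubgroup A) : Set A))
    (hζgr : ∀ {h : G} {c : C}, c ∈ ℭ h → ζ c ∈ 𝒜 h)
    (hζσ : ∀ (g : G) (c : C), ζ (σ g c) = (u g : A) * ζ c * ((u g)⁻¹ : Aˣ))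
    -- `P` is a `G`-graded `A`-module
    (𝔓 : G → AddSubgroup P)
    (hP : DirectSum.IsInternal 𝔓)
    (hPs : ∀ {g x : G} {a : A} {p : P}, a ∈ 𝒜 g → p ∈ 𝔓 x → a • p ∈ 𝔓 (g * x))
    -- `f = ζ'(c) = θ(ζ(c))`
    (c : C) (f : P →ₗ[A] P)
    (hf : ∀ v ∈ 𝔓 (1 : G), f v = ζ c • v) :
    ∀ g : G, ∀ p ∈ 𝔓 g, f p = ζ (σ g c) • p :=
  stmt16_general 𝒜 honeA hmulA hA u hu σ ζ hζσ 𝔓 hPs c f hf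
end

section
/- Let (A, A', M, M', f, g) be a surjective Morita context (f and g isomorphisms). Then the map A' → End_A(M)^op sending a' to the endomorphism m ↦ m a' is a ring isomorphism, and the map M' → Hom_A(M, A) sending m' to the map m ↦ f(m ⊗ m') is an (A',A)-bimodule isomorphism. -/
section NcT
variable (R : Type) [Ring R] (M N : Type) [AddCommGroup M] [AddCommGroup N]
  [Module Rᵐᵒᵖ M] [Module R N]

/-- The subgroup of relations defining the balanced tensor product `M ⊗_R N` of a
right `R`-module `M` and a left `R`-module `N`. -/
def ncRel : AddSubgroup (FreeAbelianGroup (M × N)) := AddSubgroup.closure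
  ({z | ∃ m₁ m₂ n, z = FreeAbelianGroup.of (m₁ + m₂, n)
          - FreeAbelianGroup.of (m₁, n) - FreeAbelianGroup.of (m₂, n)} ∪
   {z | ∃ m n₁ n₂, z = FreeAbelianGroup.of (m, n₁ + n₂)
          - FreeAbelianGroup.of (m, n₁) - FreeAbelianGroup.of (m, n₂)} ∪
   {z | ∃ (r : R) (m : M) (n : N), z = FreeAbelianGroup.of (MulOpposite.op r • m, n)
          - FreeAbelianGroup.of (m, r • n)})

/-- The balanced tensor product `M ⊗_R N` of a right `R`-module and a left
`R`-module, as an abelian group. -/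
def NcT : Type := FreeAbelianGroup (M × N) ⧸ ncRel R M N

instance : AddCommGroup (NcT R M N) :=
  inferInstanceAs (AddCommGroup (FreeAbelianGroup (M × N) ⧸ ncRel R M N))

/-- The element `m ⊗ n` of `M ⊗_R N`. -/
def ntmul (m : M) (n : N) : NcT R M N :=
  QuotientAddGroup.mk (FreeAbelianGroup.of (m, n))

end NcT

/-! Since `g` is onto, `1 = g z` for some `z ∈ M' ⊗_A M`, a sum of pure tensors; so an additive
subgroup of `A'` containing every `g (m' ⊗ m)` contains `1`. Each of the four claims (injectivity
and surjectivity of `A' → End_A(M)ᵐᵒᵖ` and of `M' → Hom_A(M, A)`) follows by choosing such a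
subgroup, on whose generators the claim is an associativity law: for instance, for
`α ∈ End_A(M)` the set of `c` with `α ∘ (· c)` a right multiplication contains `g (m' ⊗ n)`,
because
`α (m · g (m' ⊗ n)) = α (f (m ⊗ m') · n) = f (m ⊗ m') · α n = m · g (m' ⊗ α n)`. -/

open MulOpposite Function

section ntmul
variable {R : Type} [Ring R] {M N : Type} [AddCommGroup M] [AddCommGroup N]
  [Module Rᵐᵒᵖ M] [Module R N]

theorem ntmul_add_left (m₁ m₂ : M) (n : N) :
    ntmul R M N (m₁ + m₂) n = ntmul R M N m₁ n + ntmul R M N m₂ n := by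
  have hrel : (QuotientAddGroup.mk (FreeAbelianGroup.of (m₁ + m₂, n)
      - FreeAbelianGroup.of (m₁, n) - FreeAbelianGroup.of (m₂, n)) : NcT R M N) = 0 :=
    (QuotientAddGroup.eq_zero_iff _).2 <|
      AddSubgroup.subset_closure (Or.inl (Or.inl ⟨m₁, m₂, n, rfl⟩))
  rwa [QuotientAddGroup.mk_sub, QuotientAddGroup.mk_sub, sub_sub, sub_eq_zero] at hrel

theorem ntmul_add_right (m : M) (n₁ n₂ : N) :
    ntmul R M N m (n₁ + n₂) = ntmul R M N m n₁ + ntmul R M N m n₂ := by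
  have hrel : (QuotientAddGroup.mk (FreeAbelianGroup.of (m, n₁ + n₂)
      - FreeAbelianGroup.of (m, n₁) - FreeAbelianGroup.of (m, n₂)) : NcT R M N) = 0 :=
    (QuotientAddGroup.eq_zero_iff _).2 <|
      AddSubgroup.subset_closure (Or.inl (Or.inr ⟨m, n₁, n₂, rfl⟩))
  rwa [QuotientAddGroup.mk_sub, QuotientAddGroup.mk_sub, sub_sub, sub_eq_zero] at hrel

theorem ntmul_op_smul (r : R) (m : M) (n : N) :
    ntmul R M N (op r • m) n = ntmul R M N m (r • n) := by
  have hrel : (QuotientAddGroup.mk (FreeAbelianGroup.of (op r • m, n)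
      - FreeAbelianGroup.of (m, r • n)) : NcT R M N) = 0 :=
    (QuotientAddGroup.eq_zero_iff _).2 <| AddSubgroup.subset_closure (Or.inr ⟨r, m, n, rfl⟩)
  rwa [QuotientAddGroup.mk_sub, sub_eq_zero] at hrel

theorem ntmul_zero_right (m : M) : ntmul R M N m 0 = 0 :=
  (AddMonoidHom.mk' (ntmul R M N m) (ntmul_add_right m)).map_zero

theorem NcT.eq_top_of_forall_ntmul_mem {B : Type} [AddCommGroup B] (g : NcT R M N →+ B)
    (hg : Surjective g) {S : AddSubgroup B} (hS : ∀ m n, g (ntmul R M N m n) ∈ S) : S = ⊤ := by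
  refine (AddSubgroup.eq_top_iff' S).2 fun b => ?_
  obtain ⟨z, rfl⟩ := hg b
  induction z using QuotientAddGroup.induction_on with | H w => ?_
  induction w using FreeAbelianGroup.induction_on with
  | zero => exact g.map_zero ▸ S.zero_mem
  | of x => exact hS x.1 x.2
  | neg x hx => exact g.map_neg (QuotientAddGroup.mk _) ▸ S.neg_mem hx
  | add x y hx hy =>
    exact g.map_add (QuotientAddGroup.mk _) (QuotientAddGroup.mk _) ▸ S.add_mem hx hy

end ntmul

section MoritaContext
variable {A A' M M' : Type} [Ring A] [Ring A'] [AddCommGroup M] [Module A M] [Module A'ᵐᵒᵖ M]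
  [AddCommGroup M']

section
variable [Module Aᵐᵒᵖ M']

theorem toModuleEnd_injective_of_surjective [SMulCommClass A'ᵐᵒᵖ A M]
    (g : NcT A M' M →+ A') (hg : Surjective g)
    (hgr : ∀ (a' : A') (m' : M') (m : M),
      g (ntmul A M' M m' (op a' • m)) = g (ntmul A M' M m' m) * a') :
    Injective (Module.toModuleEnd A (S := A'ᵐᵒᵖ) M) := by
  refine (injective_iff_map_eq_zero _).2 fun a' ha' => ?_
  have hS := NcT.eq_top_of_forall_ntmul_mem g hg (S := (AddMonoidHom.mulRight a'.unop).ker)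
    fun m' m => by
      have hm : a' • m = 0 := LinearMap.congr_fun ha' m
      rw [AddMonoidHom.mem_ker, AddMonoidHom.mulRight_apply, ← hgr, op_unop, hm,
        ntmul_zero_right, map_zero]
  simpa using (AddSubgroup.eq_top_iff' _).1 hS 1

end

variable [Module A' M']

def pairingToDual (f : NcT A' M M' →+ A)
    (hf : ∀ (a : A) (m : M) (m' : M'),
      f (ntmul A' M M' (a • m) m') = a * f (ntmul A' M M' m m')) :
    M' →+ (M →ₗ[A] A) where
  toFun m' :=
    { toFun m := f (ntmul A' M M' m m')
      map_add' m₁ m₂ := by simp only [ntmul_add_left, map_add]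
      map_smul' a m := hf a m m' }
  map_zero' := LinearMap.ext fun m => by simp [ntmul_zero_right]
  map_add' m₁ m₂ := LinearMap.ext fun m => by simp [ntmul_add_right]

variable [Module Aᵐᵒᵖ M']

theorem toModuleEnd_surjective_of_surjective [SMulCommClass A'ᵐᵒᵖ A M]
    (f : NcT A' M M' →+ A) (g : NcT A M' M →+ A') (hg : Surjective g)
    (hassoc₁ : ∀ (m n : M) (m' : M'),
      f (ntmul A' M M' m m') • n = op (g (ntmul A M' M m' n)) • m) :
    Surjective (Module.toModuleEnd A (S := A'ᵐᵒᵖ) M) := by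
  intro α
  let ρ : A' →+ Module.End A M :=
    (Module.toModuleEnd A M).toAddMonoidHom.comp (opAddEquiv : A' ≃+ A'ᵐᵒᵖ).toAddMonoidHom
  have hS := NcT.eq_top_of_forall_ntmul_mem g hg
    (S := (Module.toModuleEnd A M).toAddMonoidHom.range.comap ((AddMonoidHom.mulLeft α).comp ρ))
    fun m' n => ⟨op (g (ntmul A M' M m' (α n))), LinearMap.ext fun m => by
      show op (g (ntmul A M' M m' (α n))) • m = α (op (g (ntmul A M' M m' n)) • m)
      rw [← hassoc₁, ← hassoc₁, map_smul]⟩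
  obtain ⟨a', ha'⟩ := (AddSubgroup.eq_top_iff' _).1 hS 1
  refine ⟨a', ha'.trans ?_⟩
  change α * Module.toModuleEnd A M (op 1) = α
  rw [op_one, map_one, mul_one]

theorem pairingToDual_injective (f : NcT A' M M' →+ A)
    (hf : ∀ (a : A) (m : M) (m' : M'),
      f (ntmul A' M M' (a • m) m') = a * f (ntmul A' M M' m m'))
    (g : NcT A M' M →+ A') (hg : Surjective g)
    (hassoc₂ : ∀ (m' n' : M') (m : M),
      g (ntmul A M' M m' m) • n' = op (f (ntmul A' M M' m n')) • m') :
    Injective (pairingToDual f hf) := by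
  refine (injective_iff_map_eq_zero _).2 fun m' hm' => ?_
  have hS := NcT.eq_top_of_forall_ntmul_mem g hg (S := ((smulAddHom A' M').flip m').ker)
    fun n' n => by
      have hn : f (ntmul A' M M' n m') = 0 := LinearMap.congr_fun hm' n
      rw [AddMonoidHom.mem_ker, AddMonoidHom.flip_apply, smulAddHom_apply, hassoc₂, hn, op_zero,
        zero_smul]
  simpa using (AddSubgroup.eq_top_iff' _).1 hS 1

theorem pairingToDual_surjective [SMulCommClass A'ᵐᵒᵖ A M] (f : NcT A' M M' →+ A)
    (hf : ∀ (a : A) (m : M) (m' : M'),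
      f (ntmul A' M M' (a • m) m') = a * f (ntmul A' M M' m m'))
    (hfr : ∀ (a : A) (m : M) (m' : M'),
      f (ntmul A' M M' m (op a • m')) = f (ntmul A' M M' m m') * a)
    (g : NcT A M' M →+ A') (hg : Surjective g)
    (hassoc₁ : ∀ (m n : M) (m' : M'),
      f (ntmul A' M M' m m') • n = op (g (ntmul A M' M m' n)) • m) :
    Surjective (pairingToDual f hf) := by
  intro l
  let ρ : A' →+ (M →ₗ[A] A) := AddMonoidHom.mk' (fun c => l ∘ₗ Module.toModuleEnd A M (op c))
    fun c d => by rw [op_add, map_add, LinearMap.comp_add]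
  have hS := NcT.eq_top_of_forall_ntmul_mem g hg (S := (pairingToDual f hf).range.comap ρ)
    fun n' n => ⟨op (l n) • n', LinearMap.ext fun m => by
      show f (ntmul A' M M' m (op (l n) • n')) = l (op (g (ntmul A M' M n' n)) • m)
      rw [hfr, ← hassoc₁, map_smul, smul_eq_mul]⟩
  obtain ⟨m', hm'⟩ := (AddSubgroup.eq_top_iff' _).1 hS 1
  refine ⟨m', hm'.trans ?_⟩
  change l ∘ₗ Module.toModuleEnd A M (op 1) = l
  rw [op_one, map_one, Module.End.one_eq_id, LinearMap.comp_id]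

end MoritaContext

theorem stmt18_general {A A' M M' : Type} [Ring A] [Ring A']
    [AddCommGroup M] [Module A M] [Module A'ᵐᵒᵖ M] [SMulCommClass A A'ᵐᵒᵖ M]
    [AddCommGroup M'] [Module A' M'] [Module Aᵐᵒᵖ M']
    (f : NcT A' M M' →+ A) (g : NcT A M' M →+ A')
    -- `f` is a homomorphism of `(A,A)`-bimodules
    (hfl : ∀ (a : A) (m : M) (m' : M'),
      f (ntmul A' M M' (a • m) m') = a * f (ntmul A' M M' m m'))
    (hfr : ∀ (a : A) (m : M) (m' : M'),
      f (ntmul A' M M' m (MulOpposite.op a • m')) = f (ntmul A' M M' m m') * a)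
    (hgr : ∀ (a' : A') (m' : M') (m : M),
      g (ntmul A M' M m' (MulOpposite.op a' • m)) = g (ntmul A M' M m' m) * a')
    (hgbij : Function.Bijective g)
    -- the associativity laws
    (hassoc₁ : ∀ (m n : M) (m' : M'),
      f (ntmul A' M M' m m') • n = MulOpposite.op (g (ntmul A M' M m' n)) • m)
    (hassoc₂ : ∀ (m' n' : M') (m : M),
      g (ntmul A M' M m' m) • n' = MulOpposite.op (f (ntmul A' M M' m n')) • m') :
    -- `A' ≅ End_A(M)^op` via `a' ↦ (m ↦ m·a')`
    (∃ e : A' ≃+* (Module.End A M)ᵐᵒᵖ,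
      ∀ (a' : A') (m : M), (MulOpposite.unop (e a')) m = MulOpposite.op a' • m) ∧
    -- `M' ≅ Hom_A(M,A)`, an `(A',A)`-bimodule isomorphism
    (∃ ψ : M' ≃+ (M →ₗ[A] A),
      (∀ (m' : M') (m : M), ψ m' m = f (ntmul A' M M' m m')) ∧
      (∀ (a' : A') (m' : M') (m : M),
        ψ (a' • m') m = ψ m' (MulOpposite.op a' • m)) ∧
      (∀ (a : A) (m' : M') (m : M),
        ψ (MulOpposite.op a • m') m = ψ m' m * a)) := by
  have := SMulCommClass.symm A A'ᵐᵒᵖ M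
  let E : A'ᵐᵒᵖ ≃+* Module.End A M := RingEquiv.ofBijective (Module.toModuleEnd A M)
    ⟨toModuleEnd_injective_of_surjective g hgbij.2 hgr,
      toModuleEnd_surjective_of_surjective f g hgbij.2 hassoc₁⟩
  let ψ : M' ≃+ (M →ₗ[A] A) := AddEquiv.ofBijective (pairingToDual f hfl)
    ⟨pairingToDual_injective f hfl g hgbij.2 hassoc₂,
      pairingToDual_surjective f hfl hfr g hgbij.2 hassoc₁⟩
  exact ⟨⟨(RingEquiv.opOp A').trans E.op, fun _ _ => rfl⟩, ψ, fun _ _ => rfl,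
    fun a' m' m => congrArg f (ntmul_op_smul a' m m').symm, fun a m' m => hfr a m m'⟩

/-- Let `(A, A', M, M', f, g)` be a surjective Morita context:
`M` an `(A,A')`-bimodule, `M'` an `(A',A)`-bimodule, and
`f : M ⊗_{A'} M' → A`, `g : M' ⊗_A M → A'` bijective bimodule homomorphisms
satisfying the associativity laws `f(m ⊗ m')·n = m·g(m' ⊗ n)` and
`g(m' ⊗ m)·n' = m'·f(m ⊗ n')`.  Then `a' ↦ (m ↦ m·a')` is a ring isomorphism
`A' ≅ End_A(M)^op`, and `m' ↦ f(− ⊗ m')` is an `(A',A)`-bimodule isomorphism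
`M' ≅ Hom_A(M,A)`, the latter with bimodule structure `(a'·φ·a)(m) = φ(m·a')·a`. -/
theorem stmt18 {A A' M M' : Type} [Ring A] [Ring A']
    [AddCommGroup M] [Module A M] [Module A'ᵐᵒᵖ M] [SMulCommClass A A'ᵐᵒᵖ M]
    [AddCommGroup M'] [Module A' M'] [Module Aᵐᵒᵖ M'] [SMulCommClass A' Aᵐᵒᵖ M']
    (f : NcT A' M M' →+ A) (g : NcT A M' M →+ A')
    -- `f` is a homomorphism of `(A,A)`-bimodules
    (hfl : ∀ (a : A) (m : M) (m' : M'),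
      f (ntmul A' M M' (a • m) m') = a * f (ntmul A' M M' m m'))
    (hfr : ∀ (a : A) (m : M) (m' : M'),
      f (ntmul A' M M' m (MulOpposite.op a • m')) = f (ntmul A' M M' m m') * a)
    -- `g` is a homomorphism of `(A',A')`-bimodules
    (hgl : ∀ (a' : A') (m' : M') (m : M),
      g (ntmul A M' M (a' • m') m) = a' * g (ntmul A M' M m' m))
    (hgr : ∀ (a' : A') (m' : M') (m : M),
      g (ntmul A M' M m' (MulOpposite.op a' • m)) = g (ntmul A M' M m' m) * a')
    -- the context is surjective: `f` and `g` are isomorphisms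
    (hfbij : Function.Bijective f) (hgbij : Function.Bijective g)
    -- the associativity laws
    (hassoc₁ : ∀ (m n : M) (m' : M'),
      f (ntmul A' M M' m m') • n = MulOpposite.op (g (ntmul A M' M m' n)) • m)
    (hassoc₂ : ∀ (m' n' : M') (m : M),
      g (ntmul A M' M m' m) • n' = MulOpposite.op (f (ntmul A' M M' m n')) • m') :
    -- `A' ≅ End_A(M)^op` via `a' ↦ (m ↦ m·a')`
    (∃ e : A' ≃+* (Module.End A M)ᵐᵒᵖ,
      ∀ (a' : A') (m : M), (MulOpposite.unop (e a')) m = MulOpposite.op a' • m) ∧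
    -- `M' ≅ Hom_A(M,A)`, an `(A',A)`-bimodule isomorphism
    (∃ ψ : M' ≃+ (M →ₗ[A] A),
      (∀ (m' : M') (m : M), ψ m' m = f (ntmul A' M M' m m')) ∧
      (∀ (a' : A') (m' : M') (m : M),
        ψ (a' • m') m = ψ m' (MulOpposite.op a' • m)) ∧
      (∀ (a : A) (m' : M') (m : M),
        ψ (MulOpposite.op a • m') m = ψ m' m * a)) :=
  stmt18_general f g hfl hfr hgr hgbij hassoc₁ hassoc₂
end
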